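/- arXiv:1907.05546 — 3 statements merged into one kernel-verified Lean document; each statement's English description precedes it below -/
import Mathlib

section
/- For every integer n ≥ 5, the Kneser graph K(n,2) is P_6-induced-saturated: K(n,2) contains no induced subgraph isomorphic to the path on 6 vertices, for every edge e of K(n,2) the graph K(n,2)−e contains an induced subgraph isomorphic to the path on 6 vertices, and for every non-edge e of K(n,2) the graph K(n,2)+e contains an induced subgraph isomorphic to the path on 6 vertices. -/
open SimpleGraph

/-- The Kneser graph `K(n,2)`: vertices are the 2-element subsets of `{1,…,n}`,
adjacent iff disjoint. -/
def kneser (n : ℕ) : SimpleGraph {s : Finset (Fin n) // s.card = 2} where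
  Adj u v := Disjoint u.1 v.1
  symm := ⟨fun u v h => h.symm⟩
  loopless := by
    constructor
    intro u h
    have h0 : u.1 = ∅ := disjoint_self.mp h
    have h2 := u.2
    rw [h0] at h2
    simp at h2

/-- `G` is `H`-induced-saturated: `G` has no induced copy of `H`, removing any edge of `G`
creates an induced copy of `H`, and adding any non-edge of `G` creates an induced copy of `H`. -/
def InducedSaturated {V : Type*} {W : Type*} (G : SimpleGraph V) (H : SimpleGraph W) : Prop :=
  IsEmpty (H ↪g G) ∧
  (∀ u v : V, G.Adj u v → Nonempty (H ↪g G.deleteEdges {s(u, v)})) ∧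
  (∀ u v : V, u ≠ v → ¬ G.Adj u v →
    Nonempty (H ↪g (G ⊔ SimpleGraph.fromEdgeSet {s(u, v)})))

/-!
Three pairwise intersecting 2-sets either share a point or lie in a common 3-set. For an induced
`P₆` with vertices `A₀, …, A₅` in `K(n,2)`, the sets `A₀, A₂, A₄` cannot lie in a 3-set, as `A₃`
avoids `A₂ ∪ A₄` but meets `A₀`. So they share a point `x`; since `A₅` avoids `x` and meets `A₁`,
which `A₀` and `A₂` avoid, both meet `A₅` in its other point `z`, forcing `A₀ = A₂ = {x, z}`.

An injection `Fin 5 ↪ Fin n` induces an induced embedding `K(5,2) ↪ K(n,2)`, and any edge (resp.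
non-edge) of `K(n,2)` is the image of the edge `{0,1}{2,3}` (resp. non-edge `{0,1}{0,2}`) of
`K(5,2)` under a suitable one. So saturation reduces to two explicit induced paths in `K(5,2)`.
-/

open Finset

namespace Finset

variable {α : Type*} [DecidableEq α] {s A B C : Finset α} {a b : α}

theorem eq_pair_of_card_eq_two (hs : #s = 2) (ha : a ∈ s) (hb : b ∈ s) (hab : a ≠ b) :
    s = {a, b} :=
  (eq_of_subset_of_card_le (insert_subset ha (singleton_subset_iff.2 hb))
    (by rw [hs, card_pair hab])).symm

theorem exists_ne_eq_pair_of_card_eq_two (hs : #s = 2) (ha : a ∈ s) :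
    ∃ b, a ≠ b ∧ s = {a, b} := by
  obtain ⟨x, y, hxy, rfl⟩ := card_eq_two.1 hs
  rcases mem_insert.1 ha with rfl | ha
  · exact ⟨y, hxy, rfl⟩
  · rw [mem_singleton.1 ha]
    exact ⟨x, hxy.symm, pair_comm _ _⟩

theorem exists_mem_mem_mem_or_subset_union (hA : #A = 2) (hB : #B = 2) (hC : #C = 2)
    (hne : B ≠ C) (hAB : ¬Disjoint A B) (hAC : ¬Disjoint A C) (hBC : ¬Disjoint B C) :
    (∃ x, x ∈ A ∧ x ∈ B ∧ x ∈ C) ∨ A ⊆ B ∪ C := by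
  obtain ⟨x, hxB, hxC⟩ := not_disjoint_iff.1 hBC
  by_cases hxA : x ∈ A
  · exact .inl ⟨x, hxA, hxB, hxC⟩
  obtain ⟨b, hbA, hbB⟩ := not_disjoint_iff.1 hAB
  obtain ⟨c, hcA, hcC⟩ := not_disjoint_iff.1 hAC
  have hbx : b ≠ x := ne_of_mem_of_not_mem hbA hxA
  have hbc : b ≠ c := by
    rintro rfl
    exact hne ((eq_pair_of_card_eq_two hB hbB hxB hbx).trans
      (eq_pair_of_card_eq_two hC hcC hxC hbx).symm)
  rw [eq_pair_of_card_eq_two hA hbA hcA hbc]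
  exact .inr (insert_subset (mem_union_left _ hbB) (singleton_subset_iff.2 (mem_union_right _ hcC)))

end Finset

theorem Fin.exists_embedding_extend {β : Type*} [Fintype β] {k m : ℕ} (f : Fin k → β)
    (hf : Function.Injective f) (hkm : k ≤ m) (hm : m ≤ Fintype.card β) :
    ∃ g : Fin m ↪ β, ∀ i, g (Fin.castLE hkm i) = f i := by
  obtain ⟨e⟩ := Function.Embedding.nonempty_of_card_le (α := Fin m) (β := β) (by simpa using hm)
  obtain ⟨σ, hσ⟩ := Equiv.Perm.exists_extending_pair (e ∘ Fin.castLE hkm) f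
    (e.injective.comp (Fin.castLE_injective hkm)) hf
  exact ⟨e.trans σ.toEmbedding, hσ⟩

namespace SimpleGraph.Embedding

variable {V W : Type*} {G : SimpleGraph V} {G' : SimpleGraph W}

def deleteEdge (f : G ↪g G') (u v : V) :
    G.deleteEdges {s(u, v)} ↪g G'.deleteEdges {s(f u, f v)} where
  toEmbedding := f.toEmbedding
  map_rel_iff' := by simp [f.injective.eq_iff]

def addEdge (f : G ↪g G') (u v : V) :
    (G ⊔ fromEdgeSet {s(u, v)}) ↪g (G' ⊔ fromEdgeSet {s(f u, f v)}) where
  toEmbedding := f.toEmbedding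
  map_rel_iff' := by simp [f.injective.eq_iff]

end SimpleGraph.Embedding

instance (n : ℕ) : DecidableRel (kneser n).Adj :=
  fun u v => inferInstanceAs (Decidable (Disjoint u.1 v.1))

def kneserPair {n : ℕ} (a b : Fin n) (h : a ≠ b := by decide) :
    {s : Finset (Fin n) // #s = 2} :=
  ⟨{a, b}, card_pair h⟩

def kneserMap {m n : ℕ} (ι : Fin m ↪ Fin n) : kneser m ↪g kneser n where
  toFun s := ⟨s.1.map ι, by rw [card_map, s.2]⟩
  inj' _ _ h := Subtype.ext (map_injective ι (congrArg Subtype.val h))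
  map_rel_iff' := disjoint_map ι

theorem coe_kneserMap_kneserPair {m n : ℕ} (ι : Fin m ↪ Fin n) (a b : Fin m) (h : a ≠ b) :
    (kneserMap ι (kneserPair a b h)).1 = {ι a, ι b} := by
  change map ι {a, b} = {ι a, ι b}
  simp

theorem kneser_isEmpty_pathGraph_embedding (n : ℕ) : IsEmpty (pathGraph 6 ↪g kneser n) := by
  refine ⟨fun f => ?_⟩
  set A : Fin 6 → Finset (Fin n) := fun i => (f i).1
  have hA i : #(A i) = 2 := (f i).2
  have hdisj {i j : Fin 6} (h : (i : ℕ) + 1 = j) : Disjoint (A i) (A j) :=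
    f.map_rel_iff.2 (pathGraph_adj.2 (.inl h))
  have hmeet {i j : Fin 6} (h : ¬((i : ℕ) + 1 = j ∨ (j : ℕ) + 1 = i)) : ¬Disjoint (A i) (A j) :=
    fun hd => h (pathGraph_adj.1 (f.map_rel_iff.1 hd))
  have hne : A 2 ≠ A 4 := fun h => absurd (f.injective (Subtype.ext h)) (by decide)
  rcases exists_mem_mem_mem_or_subset_union (hA 0) (hA 2) (hA 4) hne (hmeet (by decide))
      (hmeet (by decide)) (hmeet (by decide)) with ⟨x, hx0, hx2, hx4⟩ | hsub
  · obtain ⟨y, hy1, hy5⟩ := not_disjoint_iff.1 (hmeet (i := 1) (j := 5) (by decide))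
    obtain ⟨z, hz0, hz5⟩ := not_disjoint_iff.1 (hmeet (i := 0) (j := 5) (by decide))
    obtain ⟨w, hw2, hw5⟩ := not_disjoint_iff.1 (hmeet (i := 2) (j := 5) (by decide))
    have hzy : z ≠ y := ne_of_mem_of_not_mem hz0 (Finset.disjoint_right.1 (hdisj rfl) hy1)
    have hwy : w ≠ y := ne_of_mem_of_not_mem hw2 (Finset.disjoint_left.1 (hdisj rfl) hy1)
    have hxz : x ≠ z :=
      (ne_of_mem_of_not_mem hz5 (Finset.disjoint_left.1 (hdisj (i := 4) (j := 5) rfl) hx4)).symm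
    have hwz : w = z := by
      rw [eq_pair_of_card_eq_two (hA 5) hy5 hz5 hzy.symm] at hw5
      simpa [hwy] using hw5
    rw [hwz] at hw2
    exact absurd (f.injective (Subtype.ext ((eq_pair_of_card_eq_two (hA 0) hx0 hz0 hxz).trans
      (eq_pair_of_card_eq_two (hA 2) hx2 hw2 hxz).symm))) (by decide)
  · exact hmeet (i := 0) (j := 3) (by decide) (disjoint_of_subset_left hsub
      (disjoint_union_left.2 ⟨hdisj rfl, (hdisj rfl).symm⟩))

theorem exists_kneserMap_eq_of_adj {n : ℕ} (hn : 5 ≤ n) {u v : {s : Finset (Fin n) // #s = 2}}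
    (huv : (kneser n).Adj u v) :
    ∃ ι : Fin 5 ↪ Fin n, kneserMap ι (kneserPair 0 1) = u ∧ kneserMap ι (kneserPair 2 3) = v := by
  obtain ⟨a, b, hab, hu⟩ := card_eq_two.1 u.2
  obtain ⟨c, d, hcd, hv⟩ := card_eq_two.1 v.2
  have huv : Disjoint ({a, b} : Finset (Fin n)) {c, d} := hu ▸ hv ▸ huv
  have hinj : Function.Injective ![a, b, c, d] := by
    intro i j
    fin_cases i <;> fin_cases j <;> simp_all [eq_comm]
  obtain ⟨ι, hι⟩ := Fin.exists_embedding_extend ![a, b, c, d] hinj (by norm_num : 4 ≤ 5)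
    (by simpa using hn)
  refine ⟨ι, Subtype.ext ?_, Subtype.ext ?_⟩
  · rw [coe_kneserMap_kneserPair, hu, show ι 0 = a from hι 0, show ι 1 = b from hι 1]
  · rw [coe_kneserMap_kneserPair, hv, show ι 2 = c from hι 2, show ι 3 = d from hι 3]

theorem exists_kneserMap_eq_of_not_adj {n : ℕ} (hn : 5 ≤ n) {u v : {s : Finset (Fin n) // #s = 2}}
    (hne : u ≠ v) (huv : ¬(kneser n).Adj u v) :
    ∃ ι : Fin 5 ↪ Fin n, kneserMap ι (kneserPair 0 1) = u ∧ kneserMap ι (kneserPair 0 2) = v := by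
  obtain ⟨a, hau, hav⟩ := not_disjoint_iff.1 huv
  obtain ⟨b, hab, hu⟩ := exists_ne_eq_pair_of_card_eq_two u.2 hau
  obtain ⟨c, hac, hv⟩ := exists_ne_eq_pair_of_card_eq_two v.2 hav
  have hbc : b ≠ c := by
    rintro rfl
    exact hne (Subtype.ext (hu.trans hv.symm))
  have hinj : Function.Injective ![a, b, c] := by
    intro i j
    fin_cases i <;> fin_cases j <;> simp_all [eq_comm]
  obtain ⟨ι, hι⟩ := Fin.exists_embedding_extend ![a, b, c] hinj (by norm_num : 3 ≤ 5)
    (by simpa using hn)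
  refine ⟨ι, Subtype.ext ?_, Subtype.ext ?_⟩
  · rw [coe_kneserMap_kneserPair, hu, show ι 0 = a from hι 0, show ι 1 = b from hι 1]
  · rw [coe_kneserMap_kneserPair, hv, show ι 0 = a from hι 0, show ι 2 = c from hι 2]

def kneserFiveDeleteEdgePath :
    pathGraph 6 ↪g (kneser 5).deleteEdges {s(kneserPair 0 1, kneserPair 2 3)} where
  toFun := ![kneserPair 0 1, kneserPair 2 4, kneserPair 0 3, kneserPair 1 2, kneserPair 0 4,
    kneserPair 2 3]
  inj' := by decide
  map_rel_iff' {i j} := by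
    simp only [deleteEdges_adj, Set.mem_singleton_iff, pathGraph_adj]
    revert i j
    decide

def kneserFiveAddEdgePath :
    pathGraph 6 ↪g (kneser 5 ⊔ fromEdgeSet {s(kneserPair 0 1, kneserPair 0 2)}) where
  toFun := ![kneserPair 0 1, kneserPair 0 2, kneserPair 1 3, kneserPair 0 4, kneserPair 1 2,
    kneserPair 0 3]
  inj' := by decide
  map_rel_iff' {i j} := by
    simp only [sup_adj, fromEdgeSet_adj, Set.mem_singleton_iff, pathGraph_adj]
    revert i j
    decide

/-- For every integer `n ≥ 5`, the Kneser graph `K(n,2)` is `P₆`-induced-saturated. -/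
theorem kneser_P6_induced_saturated (n : ℕ) (hn : 5 ≤ n) :
    InducedSaturated (kneser n) (pathGraph 6) := by
  refine ⟨kneser_isEmpty_pathGraph_embedding n, fun u v huv => ?_, fun u v hne huv => ?_⟩
  · obtain ⟨ι, rfl, rfl⟩ := exists_kneserMap_eq_of_adj hn huv
    exact ⟨((kneserMap ι).deleteEdge _ _).comp kneserFiveDeleteEdgePath⟩
  · obtain ⟨ι, rfl, rfl⟩ := exists_kneserMap_eq_of_not_adj hn hne huv
    exact ⟨((kneserMap ι).addEdge _ _).comp kneserFiveAddEdgePath⟩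
end

section
/- For every integer n ≥ 5 and every non-edge e of the Kneser graph K(n,2) (an unordered pair of distinct non-adjacent vertices), the graph K(n,2)+e contains an induced path on 6 vertices. -/
open SimpleGraph

namespace SimpleGraph

variable {V W : Type*} {G : SimpleGraph V} {H : SimpleGraph W}

def Embedding.supEdge (f : G ↪g H) (x y : V) :
    G ⊔ fromEdgeSet {s(x, y)} ↪g H ⊔ fromEdgeSet {s(f x, f y)} where
  toEmbedding := f.toEmbedding
  map_rel_iff' {p q} := by
    have hsym : s(f p, f q) = s(f x, f y) ↔ s(p, q) = s(x, y) := by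
      simpa only [Sym2.map_mk] using
        (Sym2.map.injective f.injective).eq_iff (a := s(p, q)) (b := s(x, y))
    simp [hsym, f.injective.ne_iff]

instance (n : ℕ) : DecidableRel (pathGraph n).Adj := fun _ _ => decidable_of_iff' _ pathGraph_adj

end SimpleGraph

theorem Fin.exists_embedding_extending {k m n : ℕ} (hkm : k ≤ m) (hmn : m ≤ n)
    (g : Fin k → Fin n) (hg : Function.Injective g) :
    ∃ f : Fin m ↪ Fin n, ∀ i, f (Fin.castLE hkm i) = g i := by
  obtain ⟨σ, hσ⟩ :=
    Equiv.Perm.exists_extending_pair _ g (Fin.castLE_injective (hkm.trans hmn)) hg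
  exact ⟨(Fin.castLEEmb hmn).trans σ.toEmbedding, fun i => by simp [hσ]⟩

theorem Finset.exists_ne_eq_pair_of_card_eq_two_s6 {α : Type*} [DecidableEq α] {s : Finset α}
    {a : α} (hs : s.card = 2) (ha : a ∈ s) : ∃ b, b ≠ a ∧ s = {a, b} := by
  obtain ⟨b, hb⟩ : ∃ b, s.erase a = {b} :=
    Finset.card_eq_one.mp (by rw [Finset.card_erase_of_mem ha, hs])
  refine ⟨b, Finset.ne_of_mem_erase (hb ▸ Finset.mem_singleton_self b), ?_⟩
  rw [← Finset.insert_erase ha, hb]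

def kneserEmbedding {m n : ℕ} (f : Fin m ↪ Fin n) : kneser m ↪g kneser n where
  toFun s := ⟨s.1.map f, by rw [Finset.card_map, s.2]⟩
  inj' _ _ h := Subtype.ext (Finset.map_injective f (congrArg Subtype.val h))
  map_rel_iff' := Finset.disjoint_map f

@[simp]
theorem coe_kneserEmbedding_apply {m n : ℕ} (f : Fin m ↪ Fin n)
    (s : {s : Finset (Fin m) // s.card = 2}) : (kneserEmbedding f s : Finset (Fin n)) = s.1.map f :=
  rfl

theorem kneser_exists_injective_of_not_adj {n : ℕ} {u v : {s : Finset (Fin n) // s.card = 2}}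
    (huv : u ≠ v) (hna : ¬ (kneser n).Adj u v) :
    ∃ g : Fin 3 → Fin n, Function.Injective g ∧ u.1 = {g 0, g 1} ∧ v.1 = {g 0, g 2} := by
  obtain ⟨a, hau, hav⟩ := Finset.not_disjoint_iff.mp hna
  obtain ⟨b, hba, hu⟩ := Finset.exists_ne_eq_pair_of_card_eq_two_s6 u.2 hau
  obtain ⟨c, hca, hv⟩ := Finset.exists_ne_eq_pair_of_card_eq_two_s6 v.2 hav
  have hbc : b ≠ c := by
    rintro rfl
    exact huv (Subtype.ext (hu.trans hv.symm))
  refine ⟨![a, b, c], fun i j hij => ?_, hu, hv⟩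
  fin_cases i <;> fin_cases j <;> simp_all [eq_comm]

instance inst_s6 (n : ℕ) : DecidableRel (kneser n).Adj := fun u v =>
  inferInstanceAs (Decidable (Disjoint u.1 v.1))

def kneserFivePath :
    pathGraph 6 ↪g kneser 5 ⊔ fromEdgeSet {s(⟨{0, 1}, rfl⟩, ⟨{0, 2}, rfl⟩)} where
  toFun := ![⟨{0, 1}, rfl⟩, ⟨{0, 2}, rfl⟩, ⟨{1, 3}, rfl⟩, ⟨{0, 4}, rfl⟩, ⟨{1, 2}, rfl⟩,
    ⟨{0, 3}, rfl⟩]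
  inj' := by decide
  map_rel_iff' {a b} := by fin_cases a <;> fin_cases b <;> decide

/-- For every integer `n ≥ 5` and every non-edge of `K(n,2)` (an unordered pair of distinct
non-adjacent vertices), adding that non-edge creates an induced path on 6 vertices. -/
theorem kneser_addNonEdge_induced_P6 (n : ℕ) (hn : 5 ≤ n)
    (u v : {s : Finset (Fin n) // s.card = 2}) (huv : u ≠ v) (hna : ¬ (kneser n).Adj u v) :
    Nonempty (pathGraph 6 ↪g (kneser n ⊔ SimpleGraph.fromEdgeSet {s(u, v)})) := by
  obtain ⟨g, hg, hu, hv⟩ := kneser_exists_injective_of_not_adj huv hna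
  obtain ⟨f, hf⟩ := Fin.exists_embedding_extending (by norm_num : 3 ≤ 5) hn g hg
  have hfu : kneserEmbedding f ⟨{0, 1}, rfl⟩ = u :=
    Subtype.ext (by simp [hu, ← hf 0, ← hf 1])
  have hfv : kneserEmbedding f ⟨{0, 2}, rfl⟩ = v :=
    Subtype.ext (by simp [hv, ← hf 0, ← hf 2])
  rw [← hfu, ← hfv]
  exact ⟨((kneserEmbedding f).supEdge _ _).comp kneserFivePath⟩
end

section
/- For every integer n ≥ 2, the map f on the vertex set of G_n defined by f(a,b,j) = (a,b,j+1) is an automorphism of G_n, i.e., a bijection from the vertices of G_n to themselves such that two vertices are adjacent if and only if their images are adjacent. -/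
open SimpleGraph

/-- Vertex set of the graph `Gₙ`: `ℤ₂ × ℤ₂ × ℤ_{2n}`. -/
abbrev GnV (n : ℕ) : Type := ZMod 2 × ZMod 2 × ZMod (2 * n)

/-- The prescribed neighborhood of the vertex `(a, b, j)` in `Gₙ`. -/
def nbhd (n : ℕ) (v : GnV n) : Set (GnV n) :=
  {(1 - v.1, 1 - v.2.1, v.2.2),
   (v.1, 1 - v.2.1, v.2.2),
   (v.1, v.1 + v.2.1, v.2.2 - 1),
   (v.1, v.1 + v.2.1, v.2.2 + 1),
   (1 - v.1, v.1 + v.2.1, v.2.2 + if v.1 = 0 then 2 else -2)}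

/-- The graph `Gₙ` on `ℤ₂ × ℤ₂ × ℤ_{2n}`, where the neighborhood of `(a,b,j)` is exactly
`{(1-a,1-b,j), (a,1-b,j), (a,a+b,j-1), (a,a+b,j+1), (1-a,a+b,j+2(-1)^a)}`
(this relation is symmetric, and for `n ≥ 2` no vertex lies in its own neighborhood). -/
def Gn (n : ℕ) : SimpleGraph (GnV n) where
  Adj u v := u ≠ v ∧ (u ∈ nbhd n v ∨ v ∈ nbhd n u)
  symm := by
    constructor
    intro u v h
    exact ⟨Ne.symm h.1, h.2.symm⟩
  loopless := by
    constructor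
    intro u h
    exact h.1 rfl

def shift (n : ℕ) (t : ZMod (2 * n)) : GnV n ≃ GnV n :=
  (Equiv.refl _).prodCongr ((Equiv.refl _).prodCongr (Equiv.addRight t))

@[simp]
lemma shift_apply (n : ℕ) (t : ZMod (2 * n)) (v : GnV n) :
    shift n t v = (v.1, v.2.1, v.2.2 + t) :=
  rfl

/-- The neighbours of `(a, b, j)` differ from it in `j` by offsets depending only on `(a, b)`,
so translating `j` commutes with taking neighbourhoods. -/
lemma nbhd_shift (n : ℕ) (t : ZMod (2 * n)) (v : GnV n) :
    nbhd n (shift n t v) = shift n t '' nbhd n v := by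
  simp only [nbhd, Set.image_insert_eq, Set.image_singleton, shift_apply, sub_add_eq_add_sub,
    add_right_comm _ _ t]
  rfl

def shiftIso (n : ℕ) (t : ZMod (2 * n)) : Gn n ≃g Gn n where
  toEquiv := shift n t
  map_rel_iff' {u v} := by
    simp only [Gn, nbhd_shift, (shift n t).injective.mem_set_image, ne_eq,
      (shift n t).injective.eq_iff]

theorem f_is_automorphism_general (n : ℕ) :
    let f : GnV n → GnV n := fun v => (v.1, v.2.1, v.2.2 + 1)
    Function.Bijective f ∧ ∀ u v : GnV n, (Gn n).Adj u v ↔ (Gn n).Adj (f u) (f v) :=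
  ⟨(shiftIso n 1).bijective, fun _ _ => (shiftIso n 1).map_adj_iff.symm⟩

/-- The map `f(a,b,j) = (a,b,j+1)` is an automorphism of `Gₙ`: a bijection of the vertex set
such that two vertices are adjacent iff their images are adjacent. -/
theorem f_is_automorphism (n : ℕ) (hn : 2 ≤ n) :
    let f : GnV n → GnV n := fun v => (v.1, v.2.1, v.2.2 + 1)
    Function.Bijective f ∧ ∀ u v : GnV n, (Gn n).Adj u v ↔ (Gn n).Adj (f u) (f v) :=
  f_is_automorphism_general n
end
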